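/- arXiv:1410.8338 — 4 statements merged into one kernel-verified Lean document; each statement's English description precedes it below -/
import Mathlib

section
/- Let (c_t) be a solution of Smoluchowski's equation with multiplicative kernel and ⟨c_0, m⟩ < ∞. Then the identity (the correspondingly extended weak formulation) ⟨c_t,f⟩ - ⟨c_0,f⟩ = (1/2)∫₀ᵗ Σ_{m,m'} m m' c_s(m) c_s(m')(f(m+m') - f(m) - f(m')) ds holds for all bounded nonnegative f : ℕ → [0,∞), not just compactly supported ones. -/
/-!
The truncations `f · 1_{[0,b)}` are admissible test functions, so the identity holds for them;
the point is to let `b → ∞`. Testing against the truncated mass `m · 1_{m<b}`, which is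
subadditive and hence has nonpositive coagulation term, bounds every partial mass at time `t`
by `⟨c₀, m⟩`. So the mass stays finite and at most `⟨c₀, m⟩`, the coagulation integrand of any
`0 ≤ g ≤ C` is dominated by `2C⟨c₀, m⟩²`, and dominated convergence (for the sums over `ℕ × ℕ`
and for the time integral) passes the identity to the limit.
-/

open MeasureTheory Filter Topology Set

namespace Smoluchowski

noncomputable section

def coagulationTerm (a f : ℕ → ℝ) (p : ℕ × ℕ) : ℝ :=
  p.1 * p.2 * a p.1 * a p.2 * (f (p.1 + p.2) - f p.1 - f p.2)

def coagulation (a f : ℕ → ℝ) : ℝ :=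
  ∑' m : ℕ, ∑' m' : ℕ, coagulationTerm a f (m, m')

def WeakFormulation (c : ℝ → ℕ → ℝ) (f : ℕ → ℝ) : Prop :=
  ∀ t, 0 ≤ t → (∑' m : ℕ, c t m * f m) - (∑' m : ℕ, c 0 m * f m)
    = (1/2) * ∫ s in (0:ℝ)..t, coagulation (c s) f

end

section Coagulation

variable {a f : ℕ → ℝ} {C : ℝ}

lemma coagulation_nonpos_of_subadditive {g : ℕ → ℝ} (ha : ∀ m, 0 ≤ a m)
    (hg : ∀ m m', g (m + m') ≤ g m + g m') : coagulation a g ≤ 0 :=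
  tsum_nonpos fun m => tsum_nonpos fun m' =>
    mul_nonpos_of_nonneg_of_nonpos (by have := ha m; have := ha m'; positivity)
      (by linarith [hg m m'])

lemma hasSum_mass_mul_mass (ha : ∀ m, 0 ≤ a m) (hmass : Summable fun m : ℕ => (m : ℝ) * a m) :
    HasSum (fun p : ℕ × ℕ => (p.1 * a p.1) * (p.2 * a p.2)) ((∑' m : ℕ, (m : ℝ) * a m) ^ 2) := by
  have hnn : ∀ m : ℕ, 0 ≤ (m : ℝ) * a m := fun m => mul_nonneg m.cast_nonneg (ha m)
  have hnorm : Summable fun m : ℕ => ‖(m : ℝ) * a m‖ := by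
    simpa only [Real.norm_of_nonneg (hnn _)] using hmass
  rw [sq, tsum_mul_tsum_of_summable_norm hnorm hnorm]
  exact (hmass.mul_of_nonneg hmass hnn hnn).hasSum

lemma norm_coagulationTerm_le (ha : ∀ m, 0 ≤ a m) (hf : ∀ m, 0 ≤ f m) (hfC : ∀ m, f m ≤ C)
    (p : ℕ × ℕ) :
    ‖coagulationTerm a f p‖ ≤ 2 * C * ((p.1 * a p.1) * (p.2 * a p.2)) := by
  obtain ⟨m, m'⟩ := p
  have hweight : 0 ≤ (m : ℝ) * m' * a m * a m' := by
    have := ha m; have := ha m'; positivity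
  have hincr : |f (m + m') - f m - f m'| ≤ 2 * C := by
    rw [abs_le]
    constructor <;> linarith [hf (m + m'), hf m, hf m', hfC (m + m'), hfC m, hfC m']
  rw [coagulationTerm, Real.norm_eq_abs, abs_mul, abs_of_nonneg hweight]
  calc (m : ℝ) * m' * a m * a m' * |f (m + m') - f m - f m'|
      ≤ (m : ℝ) * m' * a m * a m' * (2 * C) := mul_le_mul_of_nonneg_left hincr hweight
    _ = 2 * C * ((m * a m) * (m' * a m')) := by ring

lemma coagulation_eq_tsum_coagulationTerm (ha : ∀ m, 0 ≤ a m)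
    (hmass : Summable fun m : ℕ => (m : ℝ) * a m) (hf : ∀ m, 0 ≤ f m) (hfC : ∀ m, f m ≤ C) :
    coagulation a f = ∑' p : ℕ × ℕ, coagulationTerm a f p := by
  have hsum : Summable (coagulationTerm a f) :=
    ((hasSum_mass_mul_mass ha hmass).summable.mul_left (2 * C)).of_norm_bounded
      (norm_coagulationTerm_le ha hf hfC)
  exact (hsum.tsum_prod' fun m => hsum.prod_factor m).symm

lemma abs_coagulation_le (ha : ∀ m, 0 ≤ a m) (hmass : Summable fun m : ℕ => (m : ℝ) * a m)
    (hf : ∀ m, 0 ≤ f m) (hfC : ∀ m, f m ≤ C) :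
    |coagulation a f| ≤ 2 * C * (∑' m : ℕ, (m : ℝ) * a m) ^ 2 := by
  rw [coagulation_eq_tsum_coagulationTerm ha hmass hf hfC]
  exact tsum_of_norm_bounded ((hasSum_mass_mul_mass ha hmass).mul_left (2 * C))
    (norm_coagulationTerm_le ha hf hfC)

lemma tsum_mul_indicator_Iio (a g : ℕ → ℝ) (b : ℕ) :
    ∑' m : ℕ, a m * (Iio b).indicator g m = ∑ m ∈ Finset.range b, a m * g m := by
  rw [tsum_eq_sum (s := Finset.range b) fun m hm => by simp_all]
  exact Finset.sum_congr rfl fun m hm => by simp_all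

lemma tendsto_tsum_mul_indicator_Iio {a g : ℕ → ℝ} (h : Summable fun m => a m * g m) :
    Tendsto (fun b : ℕ => ∑' m : ℕ, a m * (Iio b).indicator g m) atTop
      (𝓝 (∑' m : ℕ, a m * g m)) := by
  simpa only [tsum_mul_indicator_Iio] using h.tendsto_sum_tsum_nat

lemma eventually_indicator_Iio_eq (g : ℕ → ℝ) (m : ℕ) :
    ∀ᶠ b in atTop, (Iio b).indicator g m = g m :=
  (eventually_gt_atTop m).mono fun _ hb => Set.indicator_of_mem (mem_Iio.2 hb) g

lemma indicator_apply_le_of_le {s : Set ℕ} {f : ℕ → ℝ} {C : ℝ} (hf : ∀ m, 0 ≤ f m)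
    (hfC : ∀ m, f m ≤ C) (m : ℕ) : s.indicator f m ≤ C :=
  indicator_apply_le' (fun _ => hfC m) fun _ => (hf m).trans (hfC m)

lemma tendsto_coagulation_indicator_Iio (ha : ∀ m, 0 ≤ a m)
    (hmass : Summable fun m : ℕ => (m : ℝ) * a m) (hf : ∀ m, 0 ≤ f m) (hfC : ∀ m, f m ≤ C) :
    Tendsto (fun b : ℕ => coagulation a ((Iio b).indicator f)) atTop (𝓝 (coagulation a f)) := by
  have hfb (b m) : 0 ≤ (Iio b).indicator f m := indicator_nonneg (fun m _ => hf m) m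
  have hfbC (b m) : (Iio b).indicator f m ≤ C := indicator_apply_le_of_le hf hfC m
  simp only [coagulation_eq_tsum_coagulationTerm ha hmass (hfb _) (hfbC _),
    coagulation_eq_tsum_coagulationTerm ha hmass hf hfC]
  refine tendsto_tsum_of_dominated_convergence
    ((hasSum_mass_mul_mass ha hmass).summable.mul_left (2 * C)) (fun p => ?_)
    (.of_forall fun b => norm_coagulationTerm_le ha (hfb b) (hfbC b))
  refine tendsto_const_nhds.congr' ?_
  filter_upwards [eventually_indicator_Iio_eq f (p.1 + p.2), eventually_indicator_Iio_eq f p.1,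
    eventually_indicator_Iio_eq f p.2] with b h h₁ h₂
  simp only [coagulationTerm, h, h₁, h₂]

lemma summable_mul_of_summable_mass (ha : ∀ m, 0 ≤ a m)
    (hmass : Summable fun m : ℕ => (m : ℝ) * a m) (hf : ∀ m, 0 ≤ f m) (hf0 : f 0 = 0)
    (hfC : ∀ m, f m ≤ C) : Summable fun m => a m * f m := by
  refine (hmass.mul_left C).of_nonneg_of_le (fun m => mul_nonneg (ha m) (hf m)) fun m => ?_
  rcases Nat.eq_zero_or_pos m with rfl | hm
  · simp [hf0]
  · have hm : (1 : ℝ) ≤ m := by exact_mod_cast hm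
    calc a m * f m ≤ a m * C := mul_le_mul_of_nonneg_left (hfC m) (ha m)
      _ ≤ C * (m * a m) := by
        nlinarith [mul_nonneg (mul_nonneg ((hf 0).trans (hfC 0)) (ha m)) (sub_nonneg.2 hm)]

end Coagulation

lemma indicator_Iio_natCast_add_le (b m m' : ℕ) :
    (Iio b).indicator (Nat.cast : ℕ → ℝ) (m + m')
      ≤ (Iio b).indicator Nat.cast m + (Iio b).indicator Nat.cast m' := by
  by_cases h : m + m' < b
  · rw [Set.indicator_of_mem (mem_Iio.2 h), Set.indicator_of_mem (mem_Iio.2 (by omega : m < b)),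
      Set.indicator_of_mem (mem_Iio.2 (by omega : m' < b))]
    exact (Nat.cast_add m m').le
  · rw [Set.indicator_of_notMem (notMem_Iio.2 (not_lt.1 h))]
    exact add_nonneg (indicator_nonneg (fun _ _ => Nat.cast_nonneg _) _)
      (indicator_nonneg (fun _ _ => Nat.cast_nonneg _) _)

section Solution

variable {c : ℝ → ℕ → ℝ}

lemma weakFormulation_indicator_Iio
    (hweak : ∀ f : ℕ → ℝ, (∀ m, 0 ≤ f m) → f 0 = 0 → (∃ b : ℕ, ∀ m, b ≤ m → f m = 0) →
      WeakFormulation c f)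
    {g : ℕ → ℝ} (hg : ∀ m, 0 ≤ g m) (hg0 : g 0 = 0) (b : ℕ) :
    WeakFormulation c ((Iio b).indicator g) :=
  hweak _ (fun m => indicator_nonneg (fun m _ => hg m) m) (by simp [hg0])
    ⟨b, fun _ hm => Set.indicator_of_notMem (notMem_Iio.2 hm) g⟩

lemma sum_range_mass_le (hnn : ∀ t, 0 ≤ t → ∀ m, 0 ≤ c t m)
    (hweak : ∀ b : ℕ, WeakFormulation c ((Iio b).indicator Nat.cast))
    (hmass0 : Summable fun m : ℕ => (m : ℝ) * c 0 m) {t : ℝ} (ht : 0 ≤ t) (b : ℕ) :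
    ∑ m ∈ Finset.range b, (m : ℝ) * c t m ≤ ∑' m : ℕ, (m : ℝ) * c 0 m := by
  have hcoag : (∫ s in (0:ℝ)..t, coagulation (c s) ((Iio b).indicator Nat.cast)) ≤ 0 := by
    have := intervalIntegral.integral_nonneg (μ := volume) ht fun s hs => neg_nonneg.2 <|
      coagulation_nonpos_of_subadditive (hnn s hs.1) (indicator_Iio_natCast_add_le b)
    rwa [intervalIntegral.integral_neg, neg_nonneg] at this
  have hb := hweak b t ht
  rw [tsum_mul_indicator_Iio, tsum_mul_indicator_Iio] at hb
  calc ∑ m ∈ Finset.range b, (m : ℝ) * c t m ≤ ∑ m ∈ Finset.range b, (m : ℝ) * c 0 m := by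
        simp only [mul_comm _ (c _ _)]
        linarith
    _ ≤ ∑' m : ℕ, (m : ℝ) * c 0 m :=
        hmass0.sum_le_tsum _ fun m _ => mul_nonneg m.cast_nonneg (hnn 0 le_rfl m)

lemma summable_mass (hnn : ∀ t, 0 ≤ t → ∀ m, 0 ≤ c t m)
    (hweak : ∀ b : ℕ, WeakFormulation c ((Iio b).indicator Nat.cast))
    (hmass0 : Summable fun m : ℕ => (m : ℝ) * c 0 m) {t : ℝ} (ht : 0 ≤ t) :
    Summable fun m : ℕ => (m : ℝ) * c t m :=
  summable_of_sum_range_le (fun m => mul_nonneg m.cast_nonneg (hnn t ht m))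
    (sum_range_mass_le hnn hweak hmass0 ht)

lemma tsum_mass_le (hnn : ∀ t, 0 ≤ t → ∀ m, 0 ≤ c t m)
    (hweak : ∀ b : ℕ, WeakFormulation c ((Iio b).indicator Nat.cast))
    (hmass0 : Summable fun m : ℕ => (m : ℝ) * c 0 m) {t : ℝ} (ht : 0 ≤ t) :
    ∑' m : ℕ, (m : ℝ) * c t m ≤ ∑' m : ℕ, (m : ℝ) * c 0 m :=
  Real.tsum_le_of_sum_range_le (fun m => mul_nonneg m.cast_nonneg (hnn t ht m))
    (sum_range_mass_le hnn hweak hmass0 ht)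

lemma aestronglyMeasurable_coagulation (hcont : ∀ m, ContinuousOn (fun t => c t m) (Ici 0))
    (g : ℕ → ℝ) :
    AEStronglyMeasurable (fun s => coagulation (c s) g) (volume.restrict (Ici 0)) :=
  .tsum fun m => .tsum fun m' => ContinuousOn.aestronglyMeasurable
    (by unfold coagulationTerm; fun_prop) measurableSet_Ici

lemma tendsto_integral_coagulation_indicator_Iio (hnn : ∀ t, 0 ≤ t → ∀ m, 0 ≤ c t m)
    (hcont : ∀ m, ContinuousOn (fun t => c t m) (Ici 0))
    (hweak : ∀ b : ℕ, WeakFormulation c ((Iio b).indicator Nat.cast))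
    (hmass0 : Summable fun m : ℕ => (m : ℝ) * c 0 m) {f : ℕ → ℝ} {C : ℝ} (hf : ∀ m, 0 ≤ f m)
    (hfC : ∀ m, f m ≤ C) {t : ℝ} (ht : 0 ≤ t) :
    Tendsto (fun b : ℕ => ∫ s in (0:ℝ)..t, coagulation (c s) ((Iio b).indicator f)) atTop
      (𝓝 (∫ s in (0:ℝ)..t, coagulation (c s) f)) := by
  have hsub : uIoc 0 t ⊆ Ici 0 := by
    rw [uIoc_of_le ht]
    exact Ioc_subset_Icc_self.trans Icc_subset_Ici_self
  refine intervalIntegral.tendsto_integral_filter_of_dominated_convergence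
    (fun _ => 2 * C * (∑' m : ℕ, (m : ℝ) * c 0 m) ^ 2)
    (.of_forall fun b => (aestronglyMeasurable_coagulation hcont _).mono_set hsub)
    (.of_forall fun b => .of_forall fun s hs => ?_) intervalIntegrable_const
    (.of_forall fun s hs => tendsto_coagulation_indicator_Iio (hnn s (hsub hs))
      (summable_mass hnn hweak hmass0 (mem_Ici.1 (hsub hs))) hf hfC)
  have hs : 0 ≤ s := hsub hs
  calc ‖coagulation (c s) ((Iio b).indicator f)‖
      ≤ 2 * C * (∑' m : ℕ, (m : ℝ) * c s m) ^ 2 :=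
        abs_coagulation_le (hnn s hs) (summable_mass hnn hweak hmass0 hs)
          (fun m => indicator_nonneg (fun m _ => hf m) m) (indicator_apply_le_of_le hf hfC)
    _ ≤ 2 * C * (∑' m : ℕ, (m : ℝ) * c 0 m) ^ 2 := by
        have hC : 0 ≤ C := (hf 0).trans (hfC 0)
        have hmass_nonneg : 0 ≤ ∑' m : ℕ, (m : ℝ) * c s m :=
          tsum_nonneg fun m => mul_nonneg m.cast_nonneg (hnn s hs m)
        gcongr 2 * C * ?_ ^ 2
        exact tsum_mass_le hnn hweak hmass0 hs

end Solution

end Smoluchowski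

open Smoluchowski

theorem stmt4_general (c : ℝ → ℕ → ℝ)
    (hnn : ∀ t, 0 ≤ t → ∀ m, 0 ≤ c t m)
    (hcont : ∀ m, ContinuousOn (fun t => c t m) (Set.Ici 0))
    (hmass0 : Summable (fun m : ℕ => (m : ℝ) * c 0 m))
    (hweak : ∀ f : ℕ → ℝ, (∀ m, 0 ≤ f m) → f 0 = 0 → (∃ b : ℕ, ∀ m, b ≤ m → f m = 0) →
      ∀ t, 0 ≤ t →
        (∑' m : ℕ, c t m * f m) - (∑' m : ℕ, c 0 m * f m)
          = (1/2) * ∫ s in (0:ℝ)..t, ∑' m : ℕ, ∑' m' : ℕ,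
              (m : ℝ) * (m' : ℝ) * c s m * c s m' * (f (m + m') - f m - f m')) :
    ∀ f : ℕ → ℝ, (∀ m, 0 ≤ f m) → f 0 = 0 → (∃ C : ℝ, ∀ m, f m ≤ C) →
      ∀ t, 0 ≤ t →
        (∑' m : ℕ, c t m * f m) - (∑' m : ℕ, c 0 m * f m)
          = (1/2) * ∫ s in (0:ℝ)..t, ∑' m : ℕ, ∑' m' : ℕ,
              (m : ℝ) * (m' : ℝ) * c s m * c s m' * (f (m + m') - f m - f m') := by
  intro f hf hf0 ⟨C, hfC⟩
  show WeakFormulation c f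
  intro t ht
  have hweak_mass := weakFormulation_indicator_Iio hweak (fun m => m.cast_nonneg) Nat.cast_zero
  have hsum {s : ℝ} (hs : 0 ≤ s) : Summable fun m => c s m * f m :=
    summable_mul_of_summable_mass (hnn s hs) (summable_mass hnn hweak_mass hmass0 hs) hf hf0 hfC
  have hlhs := (tendsto_tsum_mul_indicator_Iio (hsum ht)).sub
    (tendsto_tsum_mul_indicator_Iio (hsum le_rfl))
  have hrhs := (tendsto_integral_coagulation_indicator_Iio hnn hcont hweak_mass hmass0 hf hfC
    ht).const_mul (1 / 2)
  exact tendsto_nhds_unique hlhs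
    (hrhs.congr fun b => (weakFormulation_indicator_Iio hweak hf hf0 b t ht).symm)

/-- For a solution of Smoluchowski's equation with multiplicative kernel (weak formulation
for compactly supported nonnegative test functions) whose mass is nonincreasing with finite
initial mass, the weak formulation extends to all bounded nonnegative test functions. -/
theorem stmt4 (c : ℝ → ℕ → ℝ)
    (hnn : ∀ t, 0 ≤ t → ∀ m, 0 ≤ c t m)
    (hcont : ∀ m, ContinuousOn (fun t => c t m) (Set.Ici 0))
    (hint : ∀ t, 0 ≤ t →
      IntervalIntegrable (fun s => (∑' m : ℕ, (m : ℝ) * c s m)^2) volume 0 t)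
    (hmass0 : Summable (fun m : ℕ => (m : ℝ) * c 0 m))
    (hmassdec : ∀ t, 0 ≤ t → ∑' m : ℕ, (m : ℝ) * c t m ≤ ∑' m : ℕ, (m : ℝ) * c 0 m)
    (hweak : ∀ f : ℕ → ℝ, (∀ m, 0 ≤ f m) → f 0 = 0 → (∃ b : ℕ, ∀ m, b ≤ m → f m = 0) →
      ∀ t, 0 ≤ t →
        (∑' m : ℕ, c t m * f m) - (∑' m : ℕ, c 0 m * f m)
          = (1/2) * ∫ s in (0:ℝ)..t, ∑' m : ℕ, ∑' m' : ℕ,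
              (m : ℝ) * (m' : ℝ) * c s m * c s m' * (f (m + m') - f m - f m')) :
    ∀ f : ℕ → ℝ, (∀ m, 0 ≤ f m) → f 0 = 0 → (∃ C : ℝ, ∀ m, f m ≤ C) →
      ∀ t, 0 ≤ t →
        (∑' m : ℕ, c t m * f m) - (∑' m : ℕ, c 0 m * f m)
          = (1/2) * ∫ s in (0:ℝ)..t, ∑' m : ℕ, ∑' m' : ℕ,
              (m : ℝ) * (m' : ℝ) * c s m * c s m' * (f (m + m') - f m - f m') :=
  stmt4_general c hnn hcont hmass0 hweak
end

section
/- Suppose a continuous function m : [1,∞) → (0,∞) satisfies, for all t ≥ 1 and s ≥ 0, m_{t+s}² · s ≤ m_t - m_{t+s} ≤ m_t² · s, and m_1 = 1. Then m_t = 1/t for all t ≥ 1. -/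
/-!
Formally `m' = -m²`, i.e. `(1/m)' = 1`, so `1/m t - t` should be constant. The two-sided
inequality makes this quantitative without any differentiability: on `[t₀, t]` the increments of
`g x = 1/m x - x` over `[x, x + s]` are `O(s²)`, and a function with quadratically small
increments is constant, since bisecting an interval halves the bound.
-/

open Filter Topology Set

section QuadraticIncrements

variable {f : ℝ → ℝ} {a b C : ℝ}

lemma abs_sub_le_mul_sq_div_two_pow
    (h : ∀ x y, a ≤ x → x ≤ y → y ≤ b → |f y - f x| ≤ C * (y - x) ^ 2) (n : ℕ) :
    ∀ x y, a ≤ x → x ≤ y → y ≤ b → |f y - f x| ≤ C * (y - x) ^ 2 / 2 ^ n := by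
  induction n with
  | zero => simpa using h
  | succ n ih =>
    intro x y hx hxy hy
    set z := (x + y) / 2 with hz
    calc |f y - f x| = |(f y - f z) + (f z - f x)| := by ring_nf
      _ ≤ |f y - f z| + |f z - f x| := abs_add_le _ _
      _ ≤ C * (y - z) ^ 2 / 2 ^ n + C * (z - x) ^ 2 / 2 ^ n := by
          gcongr
          · exact ih z y (by linarith [hz]) (by linarith [hz]) hy
          · exact ih x z hx (by linarith [hz]) (by linarith [hz])
      _ = C * (y - x) ^ 2 / 2 ^ (n + 1) := by ring

lemma eq_of_abs_sub_le_mul_sq (hab : a ≤ b)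
    (h : ∀ x y, a ≤ x → x ≤ y → y ≤ b → |f y - f x| ≤ C * (y - x) ^ 2) : f b = f a := by
  have hlim : Tendsto (fun n : ℕ => C * (b - a) ^ 2 * (1 / 2) ^ n) atTop (𝓝 0) := by
    simpa using (tendsto_pow_atTop_nhds_zero_of_lt_one (by norm_num : (0 : ℝ) ≤ 1 / 2)
      (by norm_num)).const_mul (C * (b - a) ^ 2)
  have hle : |f b - f a| ≤ 0 := ge_of_tendsto' hlim fun n => by
    simpa [div_eq_mul_inv] using abs_sub_le_mul_sq_div_two_pow h n a b le_rfl hab le_rfl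
  exact sub_eq_zero.mp (abs_nonpos_iff.mp hle)

end QuadraticIncrements

lemma abs_inv_sub_inv_sub_le {p q s : ℝ} (hq : 0 < q) (hs : 0 ≤ s)
    (hlow : q ^ 2 * s ≤ p - q) (hup : p - q ≤ p ^ 2 * s) :
    |q⁻¹ - p⁻¹ - s| ≤ s ^ 2 * p ^ 2 / q := by
  have hqp : q ≤ p := by nlinarith [sq_nonneg q]
  have hp : 0 < p := hq.trans_le hqp
  have hsplit : q⁻¹ - p⁻¹ - s = (p - q) / (p * q) - s := by field_simp
  rw [hsplit, abs_le]
  constructor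
  · calc -(s ^ 2 * p ^ 2 / q) ≤ -(s * (p ^ 2 * s) / p) := by
          rw [neg_le_neg_iff, div_le_div_iff₀ hp hq]; nlinarith [sq_nonneg s, sq_nonneg p]
      _ ≤ -(s * (p - q) / p) := by gcongr
      _ = q ^ 2 * s / (p * q) - s := by field_simp; ring
      _ ≤ (p - q) / (p * q) - s := by gcongr
  · calc (p - q) / (p * q) - s ≤ p ^ 2 * s / (p * q) - s := by gcongr
      _ = s * (p - q) / q := by field_simp
      _ ≤ s * (p ^ 2 * s) / q := by gcongr
      _ = s ^ 2 * p ^ 2 / q := by ring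

section SquareDifferenceInequality

variable {m : ℝ → ℝ} {t₀ : ℝ}

lemma antitoneOn_of_sq_mul_le_sub
    (hlow : ∀ t, t₀ ≤ t → ∀ s, 0 ≤ s → m (t + s) ^ 2 * s ≤ m t - m (t + s)) :
    AntitoneOn m (Ici t₀) := by
  intro x hx y _ hxy
  have h := hlow x hx (y - x) (sub_nonneg.mpr hxy)
  rw [add_sub_cancel] at h
  nlinarith [sq_nonneg (m y), sub_nonneg.mpr hxy]

lemma inv_sub_eq_of_sq_mul_le_sub_le (hpos : ∀ t, t₀ ≤ t → 0 < m t)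
    (hineq : ∀ t, t₀ ≤ t → ∀ s, 0 ≤ s →
      m (t + s) ^ 2 * s ≤ m t - m (t + s) ∧ m t - m (t + s) ≤ m t ^ 2 * s)
    {t : ℝ} (ht : t₀ ≤ t) : (m t)⁻¹ - t = (m t₀)⁻¹ - t₀ := by
  have hanti := antitoneOn_of_sq_mul_le_sub fun t ht s hs => (hineq t ht s hs).1
  refine eq_of_abs_sub_le_mul_sq (f := fun x => (m x)⁻¹ - x) (C := m t₀ ^ 2 / m t) ht ?_
  intro x y hx hxy hyt
  have hy : t₀ ≤ y := hx.trans hxy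
  obtain ⟨hlow, hup⟩ := hineq x hx (y - x) (sub_nonneg.mpr hxy)
  rw [add_sub_cancel] at hlow hup
  have hmx : m x ≤ m t₀ := hanti self_mem_Ici hx hx
  have hmy : m t ≤ m y := hanti hy ht hyt
  calc |(m y)⁻¹ - y - ((m x)⁻¹ - x)| = |(m y)⁻¹ - (m x)⁻¹ - (y - x)| := by ring_nf
    _ ≤ (y - x) ^ 2 * m x ^ 2 / m y :=
        abs_inv_sub_inv_sub_le (hpos y hy) (sub_nonneg.mpr hxy) hlow hup
    _ ≤ (y - x) ^ 2 * m t₀ ^ 2 / m t := by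
        have hmx_pos := hpos x hx
        have hmt_pos := hpos t ht
        gcongr
    _ = m t₀ ^ 2 / m t * (y - x) ^ 2 := by ring

end SquareDifferenceInequality

theorem stmt6_general (m : ℝ → ℝ)
    (hpos : ∀ t : ℝ, 1 ≤ t → 0 < m t) (h1 : m 1 = 1)
    (hineq : ∀ t : ℝ, 1 ≤ t → ∀ s : ℝ, 0 ≤ s →
      (m (t + s))^2 * s ≤ m t - m (t + s) ∧ m t - m (t + s) ≤ (m t)^2 * s) :
    ∀ t : ℝ, 1 ≤ t → m t = 1/t := by
  intro t ht
  have h := inv_sub_eq_of_sq_mul_le_sub_le hpos hineq ht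
  rw [h1, inv_one, sub_self, sub_eq_zero] at h
  rw [one_div]
  exact inv_eq_iff_eq_inv.mp h

/-- If a continuous positive function `m` on `[1,∞)` satisfies `m 1 = 1` and, for all
`t ≥ 1` and `s ≥ 0`, `m(t+s)² s ≤ m t - m(t+s) ≤ m t² s`, then `m t = 1/t` on `[1,∞)`. -/
theorem stmt6 (m : ℝ → ℝ) (hc : ContinuousOn m (Set.Ici 1))
    (hpos : ∀ t : ℝ, 1 ≤ t → 0 < m t) (h1 : m 1 = 1)
    (hineq : ∀ t : ℝ, 1 ≤ t → ∀ s : ℝ, 0 ≤ s →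
      (m (t + s))^2 * s ≤ m t - m (t + s) ∧ m t - m (t + s) ≤ (m t)^2 * s) :
    ∀ t : ℝ, 1 ≤ t → m t = 1/t :=
  stmt6_general m hpos h1 hineq
end

section
/- For t ≥ 1, the tail of the mass of the solution to Smoluchowski's equation with monodisperse initial conditions satisfies Σ_{m ≥ k} m c_t(m) ~ (√2/(t√π)) k^{-1/2} as k → ∞. -/
/-- The Borel distribution with parameter `λ`: `B(λ,m) = (λm)^{m-1} e^{-λm} / m!`. -/
noncomputable def borelPMF (l : ℝ) (m : ℕ) : ℝ :=
  (l * m) ^ (m - 1) * Real.exp (-(l * m)) / (Nat.factorial m)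

/-- The explicit solution to Smoluchowski's equation with monodisperse initial conditions. -/
noncomputable def csol (t : ℝ) (m : ℕ) : ℝ :=
  if t ≤ 1 then borelPMF t m / m else borelPMF 1 m / (m * t)

/-!
For `t ≥ 1` we have `m c_t(m) = B(1,m) / t`, and Stirling's formula gives
`B(1,m) ~ (2π)^{-1/2} m^{-3/2}`. Since `m^{-3/2} / 2 ~ m^{-1/2} - (m+1)^{-1/2}`, the Borel weights
are asymptotic to the increments of `F(m) = √(2/π) m^{-1/2}`, and tails of asymptotically
equivalent nonnegative summable series are asymptotically equivalent. The tail of the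
increments telescopes to `F(k)`.
-/

open Filter Asymptotics Real Topology

theorem eventually_hasSum_sub_succ_nat_add {F : ℕ → ℝ} (hF : ∀ᶠ n in atTop, F (n + 1) ≤ F n)
    (hF0 : Tendsto F atTop (𝓝 0)) :
    ∀ᶠ k in atTop, HasSum (fun j ↦ F (k + j) - F (k + j + 1)) (F k) := by
  obtain ⟨N, hN⟩ := eventually_atTop.1 hF
  filter_upwards [eventually_ge_atTop N] with k hk
  rw [hasSum_iff_tendsto_nat_of_nonneg fun j ↦ sub_nonneg.2 (hN _ (hk.trans (k.le_add_right j)))]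
  have hsum (n : ℕ) : ∑ j ∈ Finset.range n, (F (k + j) - F (k + j + 1)) = F k - F (k + n) :=
    Finset.sum_range_sub' (fun j ↦ F (k + j)) n
  simp only [hsum]
  simpa [add_comm k] using tendsto_const_nhds.sub ((tendsto_add_atTop_iff_nat k).2 hF0)

theorem Asymptotics.IsEquivalent.tsum_nat_add {a b : ℕ → ℝ} (hab : a ~[atTop] b)
    (hb : ∀ᶠ m in atTop, 0 ≤ b m) (hbs : Summable b) :
    (fun k ↦ ∑' j, a (k + j)) ~[atTop] fun k ↦ ∑' j, b (k + j) := by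
  have has : Summable a := summable_of_isBigO_nat hbs hab.isBigO
  refine isLittleO_iff.2 fun c hc ↦ ?_
  obtain ⟨N, hN⟩ := eventually_atTop.1 ((isLittleO_iff.1 hab hc).and hb)
  filter_upwards [eventually_ge_atTop N] with k hk
  have hbound (j : ℕ) : ‖a (k + j) - b (k + j)‖ ≤ c * b (k + j) ∧ 0 ≤ b (k + j) := by
    obtain ⟨hle, hpos⟩ := hN (k + j) (hk.trans (k.le_add_right j))
    exact ⟨by simpa [abs_of_nonneg hpos] using hle, hpos⟩
  have ha' : Summable fun j ↦ a (k + j) := by simpa [add_comm] using (summable_nat_add_iff k).2 has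
  have hb' : Summable fun j ↦ b (k + j) := by simpa [add_comm] using (summable_nat_add_iff k).2 hbs
  have hd := (ha'.sub hb').norm
  calc ‖∑' j, a (k + j) - ∑' j, b (k + j)‖ = ‖∑' j, (a (k + j) - b (k + j))‖ := by
        rw [ha'.tsum_sub hb']
    _ ≤ ∑' j, ‖a (k + j) - b (k + j)‖ := norm_tsum_le_tsum_norm hd
    _ ≤ ∑' j, c * b (k + j) := hd.tsum_le_tsum (fun j ↦ (hbound j).1) (hb'.mul_left c)
    _ = c * ‖∑' j, b (k + j)‖ := by
        rw [tsum_mul_left, norm_of_nonneg (tsum_nonneg fun j ↦ (hbound j).2)]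

theorem isEquivalent_tsum_nat_add_of_isEquivalent_sub_succ {a F : ℕ → ℝ}
    (hF : ∀ᶠ n in atTop, F (n + 1) ≤ F n) (hF0 : Tendsto F atTop (𝓝 0))
    (ha : a ~[atTop] fun m ↦ F m - F (m + 1)) :
    (fun k ↦ ∑' j, a (k + j)) ~[atTop] F := by
  have htele := eventually_hasSum_sub_succ_nat_add hF hF0
  obtain ⟨k, hk⟩ := htele.exists
  have hbs : Summable fun m ↦ F m - F (m + 1) :=
    (summable_nat_add_iff k).1 (by simpa [add_comm] using hk.summable)
  refine (ha.tsum_nat_add (hF.mono fun n hn ↦ sub_nonneg.2 hn) hbs).congr_right ?_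
  filter_upwards [htele] with k hk using hk.tsum_eq

theorem rpow_neg_one_half_eq {u : ℝ} (hu : 0 ≤ u) : u ^ (-(1 / 2) : ℝ) = (√u)⁻¹ := by
  rw [rpow_neg hu, sqrt_eq_rpow]

theorem rpow_neg_three_halves_eq {u : ℝ} (hu : 0 ≤ u) : u ^ (-(3 / 2) : ℝ) = (u * √u)⁻¹ := by
  rw [rpow_neg hu, sqrt_eq_rpow, ← rpow_one_add' hu (by norm_num)]
  norm_num

theorem tendsto_sqrt_natCast_div_sqrt_succ :
    Tendsto (fun m : ℕ ↦ √(m : ℝ) / √((m + 1 : ℕ) : ℝ)) atTop (𝓝 1) := by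
  have h := (continuous_sqrt.tendsto 1).comp (tendsto_natCast_div_add_atTop (1 : ℝ))
  rw [sqrt_one] at h
  refine h.congr fun m ↦ ?_
  push_cast
  exact sqrt_div' _ (by positivity)

theorem isEquivalent_rpow_neg_half_sub_succ :
    (fun m : ℕ ↦ (m : ℝ) ^ (-(1 / 2) : ℝ) - ((m + 1 : ℕ) : ℝ) ^ (-(1 / 2) : ℝ)) ~[atTop]
      fun m ↦ 1 / 2 * (m : ℝ) ^ (-(3 / 2) : ℝ) := by
  have hs := tendsto_sqrt_natCast_div_sqrt_succ
  -- with `s = √m / √(m+1)` the ratio of the two sides is `2 s² / (s + 1)`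
  have hlim : Tendsto (fun m : ℕ ↦ 2 * (√(m : ℝ) / √((m + 1 : ℕ) : ℝ)) ^ 2 /
      (√(m : ℝ) / √((m + 1 : ℕ) : ℝ) + 1)) atTop (𝓝 1) := by
    convert ((hs.pow 2).const_mul 2).div (hs.add_const 1) (by norm_num) using 2 <;> norm_num
  refine isEquivalent_of_tendsto_one (hlim.congr' ?_)
  filter_upwards [eventually_ge_atTop 1] with m hm
  have hm0 : (0 : ℝ) < m := by exact_mod_cast hm
  have hm1 : (0 : ℝ) < m + 1 := by positivity
  have hx2 : √(m : ℝ) ^ 2 = m := sq_sqrt hm0.le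
  have hy2 : √((m : ℝ) + 1) ^ 2 = m + 1 := sq_sqrt hm1.le
  push_cast
  simp only [Pi.div_apply, rpow_neg_one_half_eq hm0.le, rpow_neg_one_half_eq hm1.le,
    rpow_neg_three_halves_eq hm0.le]
  field_simp
  linear_combination (1 + (m : ℝ)) * hx2 - (m : ℝ) * hy2

theorem borelPMF_one_isEquivalent :
    (fun m ↦ borelPMF 1 m) ~[atTop] fun m ↦ (√(2 * π))⁻¹ * (m : ℝ) ^ (-(3 / 2) : ℝ) := by
  have hstirling := (IsEquivalent.refl (u := fun m : ℕ ↦ (m : ℝ) ^ (m - 1) * exp (-(m : ℝ)))).div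
    Stirling.factorial_isEquivalent_stirling
  refine (hstirling.congr_left (.of_forall fun m ↦ by simp [borelPMF])).congr_right ?_
  filter_upwards [eventually_ge_atTop 1] with m hm
  have hm0 : (0 : ℝ) < m := by exact_mod_cast hm
  have hpow : (m : ℝ) ^ m = (m : ℝ) ^ (m - 1) * m := by rw [← pow_succ, Nat.sub_add_cancel hm]
  simp only [Pi.div_apply, rpow_neg_three_halves_eq hm0.le, div_pow, hpow, exp_neg, ← exp_one_pow,
    mul_comm (2 : ℝ) m, sqrt_mul' _ pi_pos.le, sqrt_mul hm0.le]
  field_simp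

theorem isEquivalent_tsum_borelPMF_one_nat_add :
    (fun k ↦ ∑' j, borelPMF 1 (k + j)) ~[atTop] fun k ↦ √2 / √π * (k : ℝ) ^ (-(1 / 2) : ℝ) := by
  refine isEquivalent_tsum_nat_add_of_isEquivalent_sub_succ ?_ ?_ ?_
  · filter_upwards [eventually_ge_atTop 1] with n hn
    have hn0 : (0 : ℝ) < n := by exact_mod_cast hn
    refine mul_le_mul_of_nonneg_left (rpow_le_rpow_of_nonpos hn0 ?_ (by norm_num)) (by positivity)
    push_cast
    linarith
  · simpa using ((tendsto_rpow_neg_atTop (by norm_num : (0 : ℝ) < 1 / 2)).comp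
      tendsto_natCast_atTop_atTop).const_mul (√2 / √π)
  · have hinc := (IsEquivalent.refl (u := fun _ : ℕ ↦ √2 / √π)).mul
      isEquivalent_rpow_neg_half_sub_succ
    have hconst : √2 / √π * (1 / 2) = (√(2 * π))⁻¹ := by
      rw [sqrt_mul zero_le_two]
      field_simp
      rw [sq_sqrt zero_le_two]
    refine borelPMF_one_isEquivalent.trans
      ((hinc.symm.congr_left (.of_forall fun m ↦ ?_)).congr_right (.of_forall fun m ↦ mul_sub _ _ _))
    simp only [Pi.mul_apply, ← hconst, mul_assoc]

theorem natCast_mul_csol {t : ℝ} (ht : 1 ≤ t) {m : ℕ} (hm : m ≠ 0) :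
    m * csol t m = t⁻¹ * borelPMF 1 m := by
  rcases ht.eq_or_lt with rfl | ht
  · simp only [csol, le_refl, ↓reduceIte, inv_one, one_mul]
    field_simp
  · simp only [csol, ht.not_ge, ↓reduceIte]
    field_simp

/-- For `t ≥ 1`, the tail of the mass of the solution to Smoluchowski's equation with
monodisperse initial conditions satisfies `Σ_{m ≥ k} m c_t(m) ~ (√2/(t√π)) k^{-1/2}`
as `k → ∞`. -/
theorem stmt8 (t : ℝ) (ht : 1 ≤ t) :
    Asymptotics.IsEquivalent Filter.atTop
      (fun k : ℕ => ∑' j : ℕ, ((k + j : ℕ) : ℝ) * csol t (k + j))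
      (fun k : ℕ => Real.sqrt 2 / (t * Real.sqrt Real.pi) * (k : ℝ) ^ (-(1/2) : ℝ)) := by
  have hmass : (fun k : ℕ ↦ ∑' j : ℕ, ((k + j : ℕ) : ℝ) * csol t (k + j)) =ᶠ[atTop]
      fun k ↦ t⁻¹ * ∑' j, borelPMF 1 (k + j) := by
    filter_upwards [eventually_ge_atTop 1] with k hk
    rw [← tsum_mul_left]
    exact tsum_congr fun j ↦ natCast_mul_csol ht (by omega)
  refine ((IsEquivalent.refl.mul isEquivalent_tsum_borelPMF_one_nat_add).congr_left
    hmass.symm).congr_right (.of_forall fun k ↦ ?_)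
  simp only [Pi.mul_apply]
  field_simp
end

section
/- For any δ ∈ (0,1/2), ν ∈ (0,1], and sequences with 1 ≪ α(N) ≪ N: if n satisfies νN ≤ n ≤ N and we set σ±(n) = -N log(1 - (1/n)(1 + (1/2)(1 ± δ) α(N)/n)), then for N large enough (depending only on δ, ν, (α(N))), N p_{σ₊(n)} = 1 + (1/2)(1+δ)α(N)/n where p_t = 1 - e^{-t/N}; moreover, writing s = n - g with α(N) ≤ g ≤ 2α(N), one has p_{σ₊(n)} ≤ (1/s)(1 - (1/2)(1 - 2δ) α(N)/s). -/
set_option maxHeartbeats 800000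


/-- For `δ ∈ (0,1/2)`, `ν ∈ (0,1]`, and a threshold sequence `α(N)` with `1 ≪ α(N) ≪ N`:
for `N` large enough (depending only on `δ`, `ν`, `(α(N))`) and any `νN ≤ n ≤ N`, setting
`σ₊(n) = -N log(1 - (1/n)(1 + (1/2)(1+δ)α(N)/n))` and `p_t = 1 - e^{-t/N}`, one has
`p_{σ₊(n)} = (1/n)(1 + (1/2)(1+δ)α(N)/n)`; moreover, for `s = n - g` with
`α(N) ≤ g ≤ 2α(N)`, one has `p_{σ₊(n)} ≤ (1/s)(1 - (1/2)(1-2δ)α(N)/s)`. -/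
theorem stmt19 (a : ℕ → ℝ) (ha_pos : ∀ N, 0 < a N)
    (ha_inf : Filter.Tendsto a Filter.atTop Filter.atTop)
    (ha_small : Filter.Tendsto (fun N : ℕ => a N / N) Filter.atTop (nhds 0))
    (δ ν : ℝ) (hδ0 : 0 < δ) (hδ : δ < 1 / 2) (hν0 : 0 < ν) (hν : ν ≤ 1) :
    ∃ N₀ : ℕ, ∀ N : ℕ, N₀ ≤ N → ∀ n : ℝ, ν * N ≤ n → n ≤ N →
      (1 - Real.exp (-(-(N : ℝ) *
            Real.log (1 - (1 / n) * (1 + (1 / 2) * (1 + δ) * a N / n))) / N)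
          = (1 / n) * (1 + (1 / 2) * (1 + δ) * a N / n)) ∧
      ∀ g s : ℝ, a N ≤ g → g ≤ 2 * a N → s = n - g →
        1 - Real.exp (-(-(N : ℝ) *
            Real.log (1 - (1 / n) * (1 + (1 / 2) * (1 + δ) * a N / n))) / N)
          ≤ (1 / s) * (1 - (1 / 2) * (1 - 2 * δ) * a N / s) := by
  have hε : (0:ℝ) < min ν (ν * δ / 4) := by positivity
  obtain ⟨N₁, hN₁⟩ := Filter.eventually_atTop.mp (ha_small.eventually_lt_const hε)
  refine ⟨max N₁ (⌈2/ν⌉₊ + 1), fun N hN n hn1 hn2 => ?_⟩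
  have hN1 : N₁ ≤ N := le_trans (le_max_left _ _) hN
  have hN2 : ⌈2/ν⌉₊ + 1 ≤ N := le_trans (le_max_right _ _) hN
  have hNR : 2 / ν < (N:ℝ) := by
    calc 2/ν ≤ (⌈2/ν⌉₊ : ℝ) := Nat.le_ceil _
    _ < N := by exact_mod_cast Nat.lt_of_lt_of_le (Nat.lt_succ_self _) hN2
  have hνN : 2 < ν * (N:ℝ) := by
    rw [div_lt_iff₀ hν0] at hNR; linarith
  have hn0 : (0:ℝ) < n := lt_of_lt_of_le (by linarith) hn1
  have hn2' : 2 < n := lt_of_lt_of_le hνN hn1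
  have hN0 : (0:ℝ) < N := by nlinarith
  have haN := ha_pos N
  have hsm := hN₁ N hN1
  have h1 : a N ≤ ν * N := by
    have := (div_lt_iff₀ hN0).mp (hsm.trans_le (min_le_left _ _))
    nlinarith
  have h2 : 4 * a N ≤ δ * n := by
    have := (div_lt_iff₀ hN0).mp (hsm.trans_le (min_le_right _ _))
    nlinarith
  have han : a N ≤ n := le_trans h1 hn1
  set x := (1 / n) * (1 + (1 / 2) * (1 + δ) * a N / n) with hx
  have hx1 : x < 1 := by
    rw [hx, one_div, inv_mul_eq_div, div_lt_one hn0]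
    have hd : (1/2)*(1+δ)*a N/n ≤ 1 := by
      rw [div_le_one hn0]; nlinarith
    linarith
  have heq : 1 - Real.exp (-(-(N:ℝ) * Real.log (1 - x)) / N) = x := by
    rw [show -(-(N:ℝ) * Real.log (1 - x)) / N = Real.log (1 - x) by
      field_simp]
    rw [Real.exp_log (by linarith)]
    ring
  refine ⟨heq, fun g s hg1 hg2 hs => ?_⟩
  rw [heq]
  have hd1 : a N ≤ n - s := by rw [hs]; linarith
  have hd2 : n - s ≤ 2 * a N := by rw [hs]; linarith
  have hs0 : (0:ℝ) < s := by nlinarith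
  have hsn : s ≤ n := by nlinarith
  rw [hx, ← sub_nonneg]
  have expand : (1/s) * (1 - (1/2)*(1-2*δ)*a N/s) - (1/n) * (1 + (1/2)*(1+δ)*a N/n)
      = (n*s*(n-s) - (1/2)*(1-2*δ)*a N*n^2 - (1/2)*(1+δ)*a N*s^2) / (n^2*s^2) := by
    field_simp
    ring
  rw [expand]
  apply div_nonneg _ (by positivity)
  nlinarith [mul_nonneg (mul_nonneg (by linarith : (0:ℝ) ≤ n - s - a N) hn0.le) hs0.le,
    mul_nonneg (mul_nonneg haN.le hs0.le) (by linarith : (0:ℝ) ≤ n - s),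
    mul_nonneg (mul_nonneg (mul_nonneg hδ0.le haN.le) hs0.le) (by linarith : (0:ℝ) ≤ n - s),
    mul_nonneg (mul_nonneg haN.le hn0.le) (by linarith : (0:ℝ) ≤ δ*n - 2*a N),
    mul_nonneg (mul_nonneg haN.le hn0.le) (by linarith : (0:ℝ) ≤ 2*a N - (n - s)),
    mul_nonneg (mul_nonneg (mul_nonneg hδ0.le haN.le) hn0.le) (by linarith : (0:ℝ) ≤ n - s)]
end
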